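/- arXiv:1302.4599 — 9 statements merged into one kernel-verified Lean document; each statement's English description precedes it below -/
import Mathlib

section
/- Let E ⊆ [0,∞), let γ̃ = (γ_n) ∈ Ẽ₀ᵈ, let ((a_n,b_n)) ∈ Ĩ_Eᵈ and let ã = (a_n). Then γ̃ ≍ ã holds if and only if limsup_n a_n/γ_n < ∞ and γ_n ≤ a_n for all sufficiently large n. -/
open Filter Topology Set
open scoped ENNReal

/-- A scaling sequence: strictly positive reals tending to zero. -/
def IsScaling (r : ℕ → ℝ) : Prop := (∀ n, 0 < r n) ∧ Tendsto r atTop (𝓝 0)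

/-- A sequence of reals is almost decreasing if it is eventually nonincreasing. -/
def AlmostDecreasing (t : ℕ → ℝ) : Prop := ∀ᶠ n in atTop, t (n + 1) ≤ t n

/-- `τ ∈ Ẽ₀ᵈ`: almost decreasing, values in `E \ {0}`, tending to `0`. -/
def MemE0d (E : Set ℝ) (t : ℕ → ℝ) : Prop :=
  AlmostDecreasing t ∧ (∀ n, t n ∈ E \ {0}) ∧ Tendsto t atTop (𝓝 0)

/-- `(a,b)` is a connected component of `Int(ℝ⁺ \ E)`: an open interval in `ℝ⁺`
missing `E` that is maximal (among such intervals) with this property. -/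
def IsGapComponent (E : Set ℝ) (a b : ℝ) : Prop :=
  0 ≤ a ∧ a < b ∧ Ioo a b ∩ E = ∅ ∧
    ∀ a' b' : ℝ, 0 ≤ a' → a' ≤ a → b ≤ b' → Ioo a' b' ∩ E = ∅ → a' = a ∧ b' = b

/-- `((aₙ,bₙ))ₙ ∈ Ĩ_Eᵈ`. -/
def MemIE (E : Set ℝ) (a b : ℕ → ℝ) : Prop :=
  (∀ n, IsGapComponent E (a n) (b n)) ∧ AlmostDecreasing a ∧
    Tendsto a atTop (𝓝 0) ∧ Tendsto (fun n => (b n - a n) / b n) atTop (𝓝 1)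

/-- `x̃ ≍ ỹ`: there are `c₁, c₂ > 0` with `c₁ xₙ < yₙ < c₂ xₙ` for all `n`. -/
def Asymp (x y : ℕ → ℝ) : Prop :=
  ∃ c₁ c₂ : ℝ, 0 < c₁ ∧ 0 < c₂ ∧ ∀ n, c₁ * x n < y n ∧ y n < c₂ * x n

/-- `E` is `τ̃`-strongly porous at `0`. -/
def TauStronglyPorous (E : Set ℝ) (t : ℕ → ℝ) : Prop :=
  ∃ a b : ℕ → ℝ, MemIE E a b ∧ Asymp t a

/-- `E` is completely strongly porous at `0`. -/
def CSP (E : Set ℝ) : Prop := ∀ t : ℕ → ℝ, MemE0d E t → TauStronglyPorous E t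

/-- `L̃ = ((lₙ,mₙ)) ∈ Ĩ_Eᵈ` is universal. -/
def IsUniversal (E : Set ℝ) (l m : ℕ → ℝ) : Prop :=
  MemIE E l m ∧ ∀ a b : ℕ → ℝ, MemIE E a b →
    ∃ (N₁ : ℕ) (f : ℕ → ℕ), ∀ n, N₁ ≤ n → a n = l (f n)

/-- `M(L̃) = limsupₙ lₙ/mₙ₊₁`, as an element of `[0,∞]`. -/
noncomputable def Mlim (l m : ℕ → ℝ) : ℝ≥0∞ :=
  limsup (fun n => ENNReal.ofReal (l n / m (n + 1))) atTop

/-- `C(τ̃) = inf{ limsupₙ aₙ/τₙ : ((aₙ,bₙ)) ∈ Ĩ_Eᵈ(τ̃) }` (inf ∅ = ∞). -/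
noncomputable def Ctau (E : Set ℝ) (t : ℕ → ℝ) : ℝ≥0∞ :=
  sInf {c : ℝ≥0∞ | ∃ a b : ℕ → ℝ, MemIE E a b ∧ (∀ᶠ n in atTop, t n ≤ a n) ∧
    c = limsup (fun n => ENNReal.ofReal (a n / t n)) atTop}

/-- `C_E = sup_{τ̃ ∈ Ẽ₀ᵈ} C(τ̃)`. -/
noncomputable def Ctot (E : Set ℝ) : ℝ≥0∞ :=
  ⨆ t ∈ {t : ℕ → ℝ | MemE0d E t}, Ctau E t

/-- A normal scaling sequence for the pointed metric space `(E, |·|, 0)`. -/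
def IsNormalE (E : Set ℝ) (r : ℕ → ℝ) : Prop :=
  IsScaling r ∧ ∃ s : ℕ → ℝ, (∀ n, s n ∈ E) ∧ AlmostDecreasing s ∧
    Tendsto (fun n => s n / r n) atTop (𝓝 1)

/-- `R*(Ω₀ᴱ(n))`: the sup of all limits `limₙ sₙ/rₙ` over normal scaling sequences `r`
for `(E,|·|,0)` and sequences `s` in `E` for which the finite limit exists (sup ∅ = 0). -/
noncomputable def RstarE (E : Set ℝ) : ℝ≥0∞ :=
  sSup {c : ℝ≥0∞ | ∃ (r s : ℕ → ℝ) (L : ℝ), IsNormalE E r ∧ (∀ n, s n ∈ E) ∧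
    Tendsto (fun n => s n / r n) atTop (𝓝 L) ∧ c = ENNReal.ofReal L}

/-- `x̃` and `ỹ` are mutually stable w.r.t. `r̃`. -/
def MutuallyStable {X : Type*} [MetricSpace X] (r : ℕ → ℝ) (x y : ℕ → X) : Prop :=
  ∃ L : ℝ, Tendsto (fun n => dist (x n) (y n) / r n) atTop (𝓝 L)

/-- A family of sequences is self-stable w.r.t. `r̃`. -/
def SelfStable {X : Type*} [MetricSpace X] (r : ℕ → ℝ) (F : Set (ℕ → X)) : Prop :=
  ∀ x ∈ F, ∀ y ∈ F, MutuallyStable r x y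

/-- A maximal self-stable family w.r.t. `r̃`. -/
def MaximalSelfStable {X : Type*} [MetricSpace X] (r : ℕ → ℝ) (F : Set (ℕ → X)) : Prop :=
  SelfStable r F ∧ ∀ z : ℕ → X, z ∈ F ∨ ∃ x ∈ F, ¬ MutuallyStable r x z

/-- A normal scaling sequence for the pointed metric space `(X,d,p)`. -/
def IsNormalX {X : Type*} [MetricSpace X] (p : X) (r : ℕ → ℝ) : Prop :=
  IsScaling r ∧ ∃ x : ℕ → X, AlmostDecreasing (fun n => dist (x n) p) ∧
    Tendsto (fun n => dist (x n) p / r n) atTop (𝓝 1)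

/-- `R*(Ω_pˣ(n))`: the sup of all limits `limₙ d(xₙ,p)/rₙ` over normal scaling
sequences `r̃` and sequences `x̃` in `X` for which the finite limit exists (sup ∅ = 0). -/
noncomputable def RstarX {X : Type*} [MetricSpace X] (p : X) : ℝ≥0∞ :=
  sSup {c : ℝ≥0∞ | ∃ (r : ℕ → ℝ) (x : ℕ → X) (L : ℝ), IsNormalX p r ∧
    Tendsto (fun n => dist (x n) p / r n) atTop (𝓝 L) ∧ c = ENNReal.ofReal L}

/-- `R₊(Ω_pˣ(n))`: the inf of the strictly positive such limits (inf ∅ = ∞). -/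
noncomputable def RlowX {X : Type*} [MetricSpace X] (p : X) : ℝ≥0∞ :=
  sInf {c : ℝ≥0∞ | ∃ (r : ℕ → ℝ) (x : ℕ → X) (L : ℝ), IsNormalX p r ∧
    Tendsto (fun n => dist (x n) p / r n) atTop (𝓝 L) ∧ 0 < L ∧ c = ENNReal.ofReal L}

/-! Since `γₙ ∈ E` tends to `0`, no gap `(aₙ, bₙ)` can start at `0`, so `aₙ > 0`; and
`(bₙ - aₙ)/bₙ → 1` means `aₙ/bₙ → 0`. If `c₁ γₙ < aₙ`, then eventually `c₁ γₙ < aₙ < c₁ bₙ`,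
so `γₙ < bₙ`; as `γₙ ∈ E` avoids the gap, `γₙ ≤ aₙ`. Conversely, eventual bounds
`γₙ ≤ aₙ ≤ C γₙ` between strictly positive sequences extend to all `n` after enlarging the
constants to absorb finitely many initial terms. -/

namespace IsGapComponent

variable {E : Set ℝ} {a b x : ℝ}

theorem le_or_le_of_mem (h : IsGapComponent E a b) (hx : x ∈ E) : x ≤ a ∨ b ≤ x := by
  by_contra! hxab
  have hmem : x ∈ Ioo a b ∩ E := ⟨hxab, hx⟩
  rw [h.2.2.1] at hmem
  exact hmem

theorem left_pos (h : IsGapComponent E a b) (hx : x ∈ E) (hx0 : 0 < x) (hxb : x < b) :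
    0 < a := by
  refine h.1.lt_of_ne fun ha => ?_
  rcases h.le_or_le_of_mem hx with hxa | hbx <;> linarith

end IsGapComponent

theorem tendsto_div_of_tendsto_sub_div {α : Type*} {l : Filter α} {a b : α → ℝ}
    (hb : ∀ᶠ i in l, b i ≠ 0) (h : Tendsto (fun i => (b i - a i) / b i) l (𝓝 1)) :
    Tendsto (fun i => a i / b i) l (𝓝 0) := by
  have h' := (tendsto_const_nhds (x := (1 : ℝ))).sub h
  rw [sub_self] at h'
  refine h'.congr' ?_
  filter_upwards [hb] with i hi
  field_simp
  ring

theorem exists_forall_lt_mul_of_eventually_le {x y : ℕ → ℝ} {C : ℝ} (hx : ∀ n, 0 < x n)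
    (h : ∀ᶠ n in atTop, y n ≤ C * x n) : ∃ c, 0 < c ∧ ∀ n, y n < c * x n := by
  have hratio : ∀ᶠ n in atTop, y n / x n ≤ C :=
    h.mono fun n hn => (div_le_iff₀ (hx n)).2 hn
  obtain ⟨M, hM⟩ := (isBoundedUnder_of_eventually_le hratio).bddAbove_range
  refine ⟨max M 0 + 1, by positivity, fun n => ?_⟩
  rw [← div_lt_iff₀ (hx n)]
  exact (hM (mem_range_self n)).trans_lt (by linarith [le_max_left M 0])

theorem asymp_of_eventually_le {x y : ℕ → ℝ} {C₁ C₂ : ℝ} (hx : ∀ n, 0 < x n)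
    (hy : ∀ n, 0 < y n) (hxy : ∀ᶠ n in atTop, x n ≤ C₁ * y n)
    (hyx : ∀ᶠ n in atTop, y n ≤ C₂ * x n) : Asymp x y := by
  obtain ⟨d₁, hd₁, hxy⟩ := exists_forall_lt_mul_of_eventually_le hy hxy
  obtain ⟨d₂, hd₂, hyx⟩ := exists_forall_lt_mul_of_eventually_le hx hyx
  refine ⟨d₁⁻¹, d₂, inv_pos.2 hd₁, hd₂, fun n => ⟨?_, hyx n⟩⟩
  rw [inv_mul_lt_iff₀ hd₁]
  exact hxy n

/-- Lemma 2.3. -/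
theorem stmt1 (E : Set ℝ) (hE : E ⊆ Ici 0) (γ : ℕ → ℝ) (hγ : MemE0d E γ)
    (a b : ℕ → ℝ) (hab : MemIE E a b) :
    Asymp γ a ↔
      ((∃ C : ℝ, ∀ᶠ n in atTop, a n / γ n ≤ C) ∧ ∀ᶠ n in atTop, γ n ≤ a n) := by
  obtain ⟨-, hγE, hγ0⟩ := hγ
  obtain ⟨hgap, -, -, hba⟩ := hab
  have hγpos : ∀ n, 0 < γ n := fun n => (hE (hγE n).1).lt_of_ne' (hγE n).2
  have hbpos : ∀ n, 0 < b n := fun n => (hgap n).1.trans_lt (hgap n).2.1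
  have hapos : ∀ n, 0 < a n := fun n => by
    obtain ⟨k, hk⟩ := (hγ0.eventually (gt_mem_nhds (hbpos n))).exists
    exact (hgap n).left_pos (hγE k).1 (hγpos k) hk
  have hab0 := tendsto_div_of_tendsto_sub_div (.of_forall fun n => (hbpos n).ne') hba
  constructor
  · rintro ⟨c₁, c₂, hc₁, -, h⟩
    refine ⟨⟨c₂, .of_forall fun n => ((div_lt_iff₀ (hγpos n)).2 (h n).2).le⟩, ?_⟩
    filter_upwards [hab0.eventually (gt_mem_nhds hc₁)] with n hn
    have hγb : γ n < b n :=
      lt_of_mul_lt_mul_left ((h n).1.trans ((div_lt_iff₀ (hbpos n)).1 hn)) hc₁.le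
    exact ((hgap n).le_or_le_of_mem (hγE n).1).resolve_right hγb.not_ge
  · rintro ⟨⟨C, hC⟩, hγa⟩
    exact asymp_of_eventually_le hγpos hapos (hγa.mono fun n hn => by rwa [one_mul])
      (hC.mono fun n hn => (div_le_iff₀ (hγpos n)).1 hn)
end

section
/- Let (x_n) be a strictly decreasing sequence of positive real numbers with lim_n x_{n+1}/x_n = 0, and let W = {x_n : n ∈ ℕ}. Then W is completely strongly porous at 0, the sequence of intervals L̃ = ((x_{n+1}, x_n))_{n∈ℕ} belongs to Ĩ_Wᵈ and is universal, and M(L̃) = 1. -/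
open Filter Topology Set
open scoped ENNReal

/-!
The gaps of `W = {xₙ}` are exactly the intervals `(xₙ₊₁, xₙ)`, and their relative length
`1 - xₙ₊₁/xₙ` tends to `1`. A sequence `τ̃ ∈ W̃₀ᵈ` has `τₙ = x_{gₙ}` with `gₙ → ∞`, so eventually
`τₙ` is itself the left endpoint of the gap `(x_{gₙ}, x_{gₙ-1})`; this gives complete strong
porosity. Universality is the classification of the gaps, and `M(L̃) = 1` because `lₙ = mₙ₊₁`.
-/

lemma tendsto_zero_of_tendsto_succ_div {x : ℕ → ℝ} (hpos : ∀ n, 0 < x n)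
    (hlim : Tendsto (fun n => x (n + 1) / x n) atTop (𝓝 0)) : Tendsto x atTop (𝓝 0) := by
  have hnorm : (fun n => ‖x (n + 1)‖ / ‖x n‖) = fun n => x (n + 1) / x n := by
    simp only [Real.norm_of_nonneg (hpos _).le]
  exact (summable_of_ratio_test_tendsto_lt_one zero_lt_one
    (Eventually.of_forall fun n => (hpos n).ne') (hnorm ▸ hlim)).tendsto_atTop_zero

lemma asymp_of_mul_le_of_le {t a : ℕ → ℝ} {c : ℝ} (hc : 0 < c) (ht : ∀ n, 0 < t n)
    (h : ∀ n, c * t n ≤ a n ∧ a n ≤ t n) : Asymp t a := by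
  refine ⟨c / 2, 2, by positivity, two_pos, fun n => ?_⟩
  have hct := mul_pos hc (ht n)
  constructor <;> nlinarith [h n, ht n]

namespace IsGapComponent

variable {E : Set ℝ} {a b : ℝ}

lemma le_left_of_mem_of_lt (h : IsGapComponent E a b) {e : ℝ} (he : e ∈ E) (heb : e < b) :
    e ≤ a :=
  not_lt.mp fun hae => (h.2.2.1.subset ⟨⟨hae, heb⟩, he⟩ : e ∈ (∅ : Set ℝ))

lemma exists_mem_ge (h : IsGapComponent E a b) : ∃ e ∈ E, b ≤ e := by
  by_contra! hlt
  -- otherwise `(a, b + 1)` would be a strictly larger gap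
  have hgap : Ioo a (b + 1) ∩ E = ∅ := eq_empty_of_forall_notMem fun e ⟨⟨hae, _⟩, he⟩ =>
    (h.le_left_of_mem_of_lt he (hlt e he)).not_gt hae
  have := (h.2.2.2 a (b + 1) h.1 le_rfl (by linarith) hgap).2
  linarith

end IsGapComponent

section StrictAnti

variable {x : ℕ → ℝ}

lemma Ioo_succ_inter_range_eq_empty (hanti : StrictAnti x) (k : ℕ) :
    Ioo (x (k + 1)) (x k) ∩ range x = ∅ := by
  refine eq_empty_of_forall_notMem ?_
  rintro _ ⟨⟨h₁, h₂⟩, j, rfl⟩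
  have := hanti.lt_iff_gt.mp h₁
  have := hanti.lt_iff_gt.mp h₂
  omega

lemma isGapComponent_range_succ (hpos : ∀ n, 0 < x n) (hanti : StrictAnti x) (k : ℕ) :
    IsGapComponent (range x) (x (k + 1)) (x k) := by
  refine ⟨(hpos _).le, hanti k.lt_succ_self, Ioo_succ_inter_range_eq_empty hanti k,
    fun a' b' _ ha' hb' hgap => ⟨ha'.eq_of_not_lt fun hlt => ?_, hb'.eq_of_not_lt' fun hlt => ?_⟩⟩
  · exact (hgap.subset ⟨⟨hlt, (hanti k.lt_succ_self).trans_le hb'⟩, k + 1, rfl⟩ :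
      x (k + 1) ∈ (∅ : Set ℝ))
  · exact (hgap.subset ⟨⟨ha'.trans_lt (hanti k.lt_succ_self), hlt⟩, k, rfl⟩ : x k ∈ (∅ : Set ℝ))

lemma exists_eq_of_isGapComponent_range (hpos : ∀ n, 0 < x n) (hanti : StrictAnti x)
    (hlim0 : Tendsto x atTop (𝓝 0)) {a b : ℝ} (h : IsGapComponent (range x) a b) :
    ∃ k, a = x (k + 1) ∧ b = x k := by
  classical
  have hex : ∃ m, x m < b := (hlim0.eventually (gt_mem_nhds (h.1.trans_lt h.2.1))).exists
  obtain ⟨_, ⟨j, rfl⟩, hbj⟩ := h.exists_mem_ge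
  have hfind : Nat.find hex ≠ 0 := fun h0 =>
    (hbj.trans (hanti.antitone j.zero_le)).not_gt (h0 ▸ Nat.find_spec hex)
  obtain ⟨k, hk⟩ := Nat.exists_eq_succ_of_ne_zero hfind
  have hak : x (k + 1) ≤ a :=
    h.le_left_of_mem_of_lt ⟨_, rfl⟩ (by simpa only [hk] using Nat.find_spec hex)
  have hbk : b ≤ x k := not_lt.mp (Nat.find_min hex (by omega))
  obtain ⟨h₁, h₂⟩ := h.2.2.2 _ _ (hpos _).le hak hbk (Ioo_succ_inter_range_eq_empty hanti k)
  exact ⟨k, h₁.symm, h₂.symm⟩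

lemma tendsto_atTop_of_tendsto_comp (hpos : ∀ n, 0 < x n) (hanti : StrictAnti x) {g : ℕ → ℕ}
    (hg : Tendsto (fun n => x (g n)) atTop (𝓝 0)) : Tendsto g atTop atTop :=
  tendsto_atTop.mpr fun K =>
    (hg.eventually (gt_mem_nhds (hpos K))).mono fun _ hn => (hanti.lt_iff_gt.mp hn).le

lemma memIE_range_comp (hpos : ∀ n, 0 < x n) (hanti : StrictAnti x)
    (hlim : Tendsto (fun n => x (n + 1) / x n) atTop (𝓝 0)) {k : ℕ → ℕ}
    (hk : Tendsto k atTop atTop) (hdec : AlmostDecreasing fun n => x (k n + 1)) :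
    MemIE (range x) (fun n => x (k n + 1)) (fun n => x (k n)) := by
  refine ⟨fun n => isGapComponent_range_succ hpos hanti (k n), hdec,
    (tendsto_zero_of_tendsto_succ_div hpos hlim).comp ((tendsto_add_atTop_nat 1).comp hk), ?_⟩
  have h := (tendsto_const_nhds (x := (1 : ℝ))).sub (hlim.comp hk)
  rw [sub_zero] at h
  refine h.congr fun n => ?_
  simp only [Function.comp_apply, sub_div, div_self (hpos (k n)).ne']

lemma csp_range (hpos : ∀ n, 0 < x n) (hanti : StrictAnti x)
    (hlim : Tendsto (fun n => x (n + 1) / x n) atTop (𝓝 0)) : CSP (range x) := by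
  rintro t ⟨htdec, htmem, htlim⟩
  choose g hg using fun n => (htmem n).1
  have hgt : Tendsto g atTop atTop :=
    tendsto_atTop_of_tendsto_comp hpos hanti (by simpa only [hg] using htlim)
  have hev : ∀ᶠ n in atTop, x (g n - 1 + 1) = t n :=
    (hgt.eventually_ge_atTop 1).mono fun n hn => by rw [Nat.sub_add_cancel hn, hg]
  refine ⟨_, _, memIE_range_comp hpos hanti hlim (k := fun n => g n - 1)
    ((tendsto_sub_atTop_nat 1).comp hgt) ?_, ?_⟩
  · filter_upwards [hev, (tendsto_add_atTop_nat 1).eventually hev, htdec] with n h₁ h₂ h₃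
    rw [h₁, h₂]
    exact h₃
  · refine asymp_of_mul_le_of_le (div_pos (hpos 1) (hpos 0)) (fun n => hg n ▸ hpos _)
      fun n => ?_
    rw [← hg n]
    -- `g n - 1` truncates at `0`: for `τₙ = x₀` the chosen gap is `(x₁, x₀)`
    rcases Nat.eq_zero_or_pos (g n) with h0 | h1
    · rw [h0, div_mul_cancel₀ _ (hpos 0).ne']
      exact ⟨le_rfl, (hanti zero_lt_one).le⟩
    · rw [Nat.sub_add_cancel h1]
      have : x 1 / x 0 ≤ 1 := (div_le_one (hpos 0)).mpr (hanti zero_lt_one).le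
      exact ⟨mul_le_of_le_one_left (hpos _).le this, le_rfl⟩

lemma isUniversal_range (hpos : ∀ n, 0 < x n) (hanti : StrictAnti x)
    (hlim : Tendsto (fun n => x (n + 1) / x n) atTop (𝓝 0)) :
    IsUniversal (range x) (fun n => x (n + 1)) x := by
  refine ⟨memIE_range_comp hpos hanti hlim tendsto_id
    (Eventually.of_forall fun n => (hanti (n + 1).lt_succ_self).le), fun a b hab => ?_⟩
  choose f hf _ using fun n => exists_eq_of_isGapComponent_range hpos hanti
    (tendsto_zero_of_tendsto_succ_div hpos hlim) (hab.1 n)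
  exact ⟨0, f, fun n _ => hf n⟩

end StrictAnti

/-- Example 2 (Example 4.4.7). -/
theorem stmt2 (x : ℕ → ℝ) (hpos : ∀ n, 0 < x n) (hanti : StrictAnti x)
    (hlim : Tendsto (fun n => x (n + 1) / x n) atTop (𝓝 0)) :
    CSP (Set.range x) ∧
      MemIE (Set.range x) (fun n => x (n + 1)) x ∧
      IsUniversal (Set.range x) (fun n => x (n + 1)) x ∧
      Mlim (fun n => x (n + 1)) x = 1 := by
  have huniv := isUniversal_range hpos hanti hlim
  refine ⟨csp_range hpos hanti hlim, huniv.1, huniv, ?_⟩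
  simp only [Mlim, div_self (hpos _).ne', ENNReal.ofReal_one, limsup_const]
end

section
/- Let (X,d,p) be a pointed metric space. The following are equivalent: (i) there is a constant c > 0 such that for every scaling sequence r̃ = (r_n) and every sequence (x_n) in X for which the finite limit lim_n d(x_n,p)/r_n exists, this limit is at most c (i.e., the family of all pretangent spaces to X at p is uniformly bounded); (ii) p is an isolated point of X. -/
open Filter Topology Set
open scoped ENNReal

/-- Witness: `xₙ → p` with `xₙ ≠ p`, and `rₙ = d(xₙ,p)/c`. -/
theorem exists_isScaling_tendsto_dist_div {X : Type*} [MetricSpace X] {p : X}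
    (hp : p ∈ closure ({p}ᶜ : Set X)) {c : ℝ} (hc : 0 < c) :
    ∃ (r : ℕ → ℝ) (x : ℕ → X),
      IsScaling r ∧ Tendsto (fun n => dist (x n) p / r n) atTop (𝓝 c) := by
  obtain ⟨x, hx_ne, hx_lim⟩ := mem_closure_iff_seq_limit.1 hp
  have hdist_pos : ∀ n, 0 < dist (x n) p := fun n => dist_pos.2 (hx_ne n)
  refine ⟨fun n => dist (x n) p / c, x, ⟨fun n => div_pos (hdist_pos n) hc, ?_⟩, ?_⟩
  · simpa using (tendsto_iff_dist_tendsto_zero.1 hx_lim).div_const c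
  · simp only [div_div_cancel₀ (hdist_pos _).ne']
    exact tendsto_const_nhds

theorem tendsto_of_tendsto_dist_div {X ι : Type*} [PseudoMetricSpace X] {l : Filter ι}
    {p : X} {x : ι → X} {r : ι → ℝ} {L : ℝ} (hr_ne : ∀ i, r i ≠ 0)
    (hr : Tendsto r l (𝓝 0)) (hL : Tendsto (fun i => dist (x i) p / r i) l (𝓝 L)) :
    Tendsto x l (𝓝 p) := by
  rw [tendsto_iff_dist_tendsto_zero]
  simpa [div_mul_cancel₀ _ (hr_ne _)] using hL.mul hr

/-- Since `xᵢ → p` and `p` is isolated, eventually `xᵢ = p`. -/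
theorem eq_zero_of_tendsto_dist_div_of_singleton_mem_nhds {X ι : Type*} [PseudoMetricSpace X]
    {l : Filter ι} [l.NeBot] {p : X} (hp : {p} ∈ 𝓝 p) {x : ι → X} {r : ι → ℝ} {L : ℝ}
    (hr_ne : ∀ i, r i ≠ 0) (hr : Tendsto r l (𝓝 0))
    (hL : Tendsto (fun i => dist (x i) p / r i) l (𝓝 L)) :
    L = 0 := by
  have hx_eq : ∀ᶠ i in l, x i = p := tendsto_of_tendsto_dist_div hr_ne hr hL hp
  refine tendsto_nhds_unique hL (tendsto_const_nhds.congr' ?_)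
  filter_upwards [hx_eq] with i hi
  simp [hi]

/-- the family of all pretangent spaces to `X` at `p` is uniformly
bounded iff `p` is an isolated point of `X`. -/
theorem stmt4 {X : Type*} [MetricSpace X] (p : X) :
    (∃ c : ℝ, 0 < c ∧ ∀ (r : ℕ → ℝ) (x : ℕ → X) (L : ℝ), IsScaling r →
        Tendsto (fun n => dist (x n) p / r n) atTop (𝓝 L) → L ≤ c) ↔
      p ∉ closure ({p}ᶜ : Set X) := by
  constructor
  · rintro ⟨c, hc, hbound⟩ hp
    obtain ⟨r, x, hr, hlim⟩ := exists_isScaling_tendsto_dist_div hp (mul_pos two_pos hc)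
    linarith [hbound r x _ hr hlim]
  · intro hp
    have hp_open : {p} ∈ 𝓝 p := by
      rwa [closure_compl, notMem_compl_iff, mem_interior_iff_mem_nhds] at hp
    refine ⟨1, one_pos, fun r x L ⟨hr_pos, hr⟩ hL => ?_⟩
    rw [eq_zero_of_tendsto_dist_div_of_singleton_mem_nhds hp_open
      (fun n => (hr_pos n).ne') hr hL]
    exact zero_le_one
end

section
/- Let (X,d,p) be a pointed metric space, let r̃ = (r_n) be a scaling sequence and let (x_n) be a sequence in X such that the limit lim_n d(x_n,p)/r_n exists and lies in (0,∞). Then there exist a constant c > 0 and a strictly increasing sequence (n_k) of natural numbers such that the sequence (c·r_{n_k})_{k∈ℕ} is a normal scaling sequence for (X,d,p). -/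
open Filter Topology Set
open scoped ENNReal

/-- By the Ramsey-type dichotomy for sequences, some subsequence is either strictly increasing
or nonincreasing; a strictly increasing one would stay strictly below its limit `a`. -/
theorem exists_strictMono_antitone_comp_of_tendsto {α : Type*} [LinearOrder α]
    [TopologicalSpace α] [OrderClosedTopology α] {t : ℕ → α} {a : α}
    (ht : Tendsto t atTop (𝓝 a)) (hle : ∀ n, a ≤ t n) :
    ∃ φ : ℕ → ℕ, StrictMono φ ∧ Antitone (t ∘ φ) := by
  obtain ⟨g, hinc | hnoninc⟩ := exists_increasing_or_nonincreasing_subseq (· < ·) t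
  · have hmono : StrictMono (t ∘ g) :=
      strictMono_nat_of_lt_succ fun n => hinc n (n + 1) n.lt_succ_self
    have hlim : Tendsto (t ∘ g) atTop (𝓝 a) := ht.comp g.strictMono.tendsto_atTop
    have hbelow : t (g 0) < a :=
      (hmono Nat.zero_lt_one).trans_le (hmono.monotone.ge_of_tendsto hlim 1)
    exact absurd hbelow (not_lt.2 (hle _))
  · exact ⟨g, g.strictMono,
      antitone_nat_of_succ_le fun n => not_lt.1 (hnoninc n (n + 1) n.lt_succ_self)⟩

/-- Proposition (i₁). -/
theorem stmt5 {X : Type*} [MetricSpace X] (p : X) (r : ℕ → ℝ) (hr : IsScaling r)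
    (x : ℕ → X) (L : ℝ) (hL : 0 < L)
    (hx : Tendsto (fun n => dist (x n) p / r n) atTop (𝓝 L)) :
    ∃ (c : ℝ) (nk : ℕ → ℕ), 0 < c ∧ StrictMono nk ∧
      IsNormalX p (fun k => c * r (nk k)) := by
  have hdist : Tendsto (fun n => dist (x n) p) atTop (𝓝 0) := by
    simpa [div_mul_cancel₀ _ (hr.1 _).ne'] using hx.mul hr.2
  obtain ⟨φ, hφ, hanti⟩ :=
    exists_strictMono_antitone_comp_of_tendsto hdist fun _ => dist_nonneg
  have hφ_lim := hφ.tendsto_atTop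
  refine ⟨L, φ, hL, hφ, ⟨fun k => mul_pos hL (hr.1 (φ k)), ?_⟩, x ∘ φ,
    Eventually.of_forall fun k => hanti k.le_succ, ?_⟩
  · simpa using (hr.2.comp hφ_lim).const_mul L
  · have hratio := (hx.comp hφ_lim).div_const L
    rw [div_self hL.ne'] at hratio
    refine hratio.congr fun k => ?_
    simp only [Function.comp_apply, div_div, mul_comm]
end

section
/- Let (X,d,p) be a pointed metric space and let r̃ = (r_n) be an almost decreasing scaling sequence. If there is a sequence (y_n) in X with d(y_n,p) > 0 for every n and lim_n d(y_n,p)/r_n = 1, then there is a sequence (x_n) in X such that (d(x_n,p)) is almost decreasing and lim_n d(x_n,p)/r_n = 1; in particular r̃ is a normal scaling sequence for (X,d,p). -/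
open Filter Topology Set
open scoped ENNReal

/-! Replace `y n` by a point `y k`, `k ≥ n`, maximizing `d(y j, p)` over `j ≥ n`; the maximum
exists because `d(y j, p) → 0` while `d(y n, p) > 0`. These maxima are nonincreasing in `n`, and
since `r` is eventually nonincreasing,
`d(y n, p) / r n ≤ d(y k, p) / r n ≤ d(y k, p) / r k`, so the ratio is squeezed to `1`. -/

theorem Filter.Tendsto.exists_isMaxOn_Ici {α : Type*} [LinearOrder α] [TopologicalSpace α]
    [OrderClosedTopology α] {f : ℕ → α} {a : α} (hf : Tendsto f atTop (𝓝 a)) {n : ℕ}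
    (hn : a < f n) : ∃ k ∈ Ici n, IsMaxOn f (Ici n) k := by
  have hfin : {j | f n ≤ f j}.Finite := by
    have hlt : ∀ᶠ j in cofinite, f j < f n := by
      rw [Nat.cofinite_eq_atTop]; exact hf.eventually_lt_const hn
    simpa only [not_lt] using eventually_cofinite.1 hlt
  obtain ⟨k, hk, hkmax⟩ :=
    exists_max_image _ f (hfin.inter_of_left (Ici n)) ⟨n, le_rfl, mem_Ici.2 le_rfl⟩
  refine ⟨k, hk.2, fun j hj => ?_⟩
  rcases le_or_gt (f n) (f j) with hnj | hjn
  · exact hkmax j ⟨hnj, hj⟩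
  · exact hjn.le.trans (hkmax n ⟨le_rfl, mem_Ici.2 le_rfl⟩)

theorem Filter.Tendsto.exists_antitone_comp {α : Type*} [LinearOrder α] [TopologicalSpace α]
    [OrderClosedTopology α] {f : ℕ → α} {a : α} (hf : Tendsto f atTop (𝓝 a))
    (hlt : ∀ n, a < f n) :
    ∃ K : ℕ → ℕ, (∀ n, n ≤ K n) ∧ (∀ n, f n ≤ f (K n)) ∧ Antitone (f ∘ K) := by
  choose K hKge hKmax using fun n => hf.exists_isMaxOn_Ici (hlt n)
  exact ⟨K, hKge, fun n => hKmax n (mem_Ici.2 le_rfl),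
    fun m n hmn => hKmax m (mem_Ici.2 (hmn.trans (hKge n)))⟩

theorem AlmostDecreasing.exists_antitoneOn_Ici {r : ℕ → ℝ} (hr : AlmostDecreasing r) :
    ∃ N, AntitoneOn r (Ici N) := by
  obtain ⟨N, hN⟩ := eventually_atTop.1 hr
  exact ⟨N, antitoneOn_nat_Ici_of_succ_le hN⟩

theorem tendsto_comp_div_of_le {g r : ℕ → ℝ} {K : ℕ → ℕ} {L : ℝ} (hK : ∀ n, n ≤ K n)
    (hgK : ∀ n, g n ≤ g (K n)) (hg : ∀ n, 0 ≤ g n) (hr : ∀ n, 0 < r n)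
    (hrd : AlmostDecreasing r) (hlim : Tendsto (fun n => g n / r n) atTop (𝓝 L)) :
    Tendsto (fun n => g (K n) / r n) atTop (𝓝 L) := by
  obtain ⟨N, hN⟩ := hrd.exists_antitoneOn_Ici
  have hKtop : Tendsto K atTop atTop := tendsto_atTop_mono hK tendsto_id
  refine tendsto_of_tendsto_of_tendsto_of_le_of_le' hlim (hlim.comp hKtop)
    (Eventually.of_forall fun n => div_le_div_of_nonneg_right (hgK n) (hr n).le) ?_
  filter_upwards [eventually_ge_atTop N] with n hn
  exact div_le_div_of_nonneg_left (hg _) (hr _) (hN hn (mem_Ici.2 (hn.trans (hK n))) (hK n))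

/-- Proposition (i₃). -/
theorem stmt6 {X : Type*} [MetricSpace X] (p : X) (r : ℕ → ℝ) (hr : IsScaling r)
    (hrd : AlmostDecreasing r) (y : ℕ → X) (hy : ∀ n, 0 < dist (y n) p)
    (hlim : Tendsto (fun n => dist (y n) p / r n) atTop (𝓝 1)) :
    (∃ x : ℕ → X, AlmostDecreasing (fun n => dist (x n) p) ∧
        Tendsto (fun n => dist (x n) p / r n) atTop (𝓝 1)) ∧
      IsNormalX p r := by
  obtain ⟨hrpos, hr0⟩ := hr
  have hy0 : Tendsto (fun n => dist (y n) p) atTop (𝓝 0) := by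
    simpa using (hlim.mul hr0).congr fun n => div_mul_cancel₀ _ (hrpos n).ne'
  obtain ⟨K, hKge, hKmax, hanti⟩ := hy0.exists_antitone_comp hy
  have hxd : AlmostDecreasing fun n => dist (y (K n)) p :=
    Eventually.of_forall fun n => hanti n.le_succ
  have hxlim : Tendsto (fun n => dist (y (K n)) p / r n) atTop (𝓝 1) :=
    tendsto_comp_div_of_le hKge hKmax (fun n => dist_nonneg) hrpos hrd hlim
  exact ⟨⟨y ∘ K, hxd, hxlim⟩, ⟨hrpos, hr0⟩, y ∘ K, hxd, hxlim⟩
end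

section
/- Let E ⊆ [0,∞) with 0 an accumulation point of E. If R*(Ω_0^E(n)) < ∞, i.e., there is a constant c such that lim_n s_n/r_n ≤ c for every normal scaling sequence r̃ = (r_n) for (E,|·|,0) and every sequence (s_n) in E for which this finite limit exists, then E is completely strongly porous at 0. -/
open Filter Topology Set
open scoped ENNReal

/-!
Let `K = R*(Ω₀ᴱ(n))` and `t ∈ Ẽ₀ᵈ`. For every `m > K + 1` the annulus `[(K+1) tₙ, m tₙ]`
eventually contains no point of `E`: otherwise a subsequence of ratios `e/tₙ ∈ [K+1, m]`
converges to some `L ≥ K + 1`, and since the (sub)sequence `t` is itself a normal scaling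
sequence, `L ≤ K`. Hence the gap of `E` just above `(K+1) tₙ` starts at
`aₙ = sup (E ∩ [0, (K+1) tₙ]) ∈ [tₙ, (K+1) tₙ]` and ends beyond `m tₙ` for every `m`,
which is exactly `t`-strong porosity.
-/

namespace AlmostDecreasing

theorem comp_strictMono {t : ℕ → ℝ} (ht : AlmostDecreasing t) {φ : ℕ → ℕ}
    (hφ : StrictMono φ) : AlmostDecreasing (t ∘ φ) := by
  obtain ⟨N, hN⟩ := eventually_atTop.mp ht
  have hanti := antitoneOn_nat_Ici_of_succ_le hN
  filter_upwards [eventually_ge_atTop N] with n hn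
  exact hanti (mem_Ici.2 (hn.trans hφ.le_apply))
    (mem_Ici.2 ((hn.trans n.le_succ).trans hφ.le_apply)) (hφ.monotone n.le_succ)

theorem congr {t u : ℕ → ℝ} (ht : AlmostDecreasing t) (htu : t =ᶠ[atTop] u) :
    AlmostDecreasing u := by
  filter_upwards [ht, htu, (tendsto_add_atTop_nat 1).eventually htu] with n hn h0 h1
  rwa [← h0, ← h1]

end AlmostDecreasing

theorem asymp_of_forall_ge {t a : ℕ → ℝ} (ht : ∀ n, 0 < t n) (ha : ∀ n, 0 < a n) (N : ℕ) :
    ∀ c₁ c₂ : ℝ, 0 < c₁ → 0 < c₂ →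
      (∀ n, N ≤ n → c₁ * t n < a n ∧ a n < c₂ * t n) → Asymp t a := by
  induction N with
  | zero => exact fun c₁ c₂ h₁ h₂ h => ⟨c₁, c₂, h₁, h₂, fun n => h n n.zero_le⟩
  | succ N ih =>
    intro c₁ c₂ h₁ h₂ h
    refine ih (min c₁ (a N / (2 * t N))) (max c₂ (2 * a N / t N))
      (lt_min h₁ (by have := ha N; have := ht N; positivity)) (h₂.trans_le (le_max_left _ _)) ?_
    intro n hn
    rcases hn.eq_or_lt with hNn | hlt
    · subst hNn
      have htN := ht N
      have hlow : min c₁ (a N / (2 * t N)) * t N ≤ a N / 2 := by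
        calc _ ≤ a N / (2 * t N) * t N := by gcongr; exact min_le_right _ _
          _ = a N / 2 := by field_simp
      have hup : 2 * a N ≤ max c₂ (2 * a N / t N) * t N := by
        calc 2 * a N = 2 * a N / t N * t N := by field_simp
          _ ≤ _ := by gcongr; exact le_max_right _ _
      constructor <;> linarith [ha N]
    · obtain ⟨hlow, hup⟩ := h n hlt
      exact ⟨(mul_le_mul_of_nonneg_right (min_le_left _ _) (ht n).le).trans_lt hlow,
        hup.trans_le (mul_le_mul_of_nonneg_right (le_max_left _ _) (ht n).le)⟩

theorem asymp_of_eventually {t a : ℕ → ℝ} (ht : ∀ n, 0 < t n) (ha : ∀ n, 0 < a n)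
    {c₁ c₂ : ℝ} (h₁ : 0 < c₁) (h₂ : 0 < c₂)
    (h : ∀ᶠ n in atTop, c₁ * t n < a n ∧ a n < c₂ * t n) : Asymp t a := by
  obtain ⟨N, hN⟩ := eventually_atTop.mp h
  exact asymp_of_forall_ge ht ha N c₁ c₂ h₁ h₂ hN

theorem tendsto_sub_div_self_of_forall_eventually_mul_le {α : Type*} {l : Filter α}
    {a b : α → ℝ} (ha : ∀ x, 0 ≤ a x) (hb : ∀ᶠ x in l, 0 < b x)
    (h : ∀ m > 0, ∀ᶠ x in l, m * a x ≤ b x) :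
    Tendsto (fun x => (b x - a x) / b x) l (𝓝 1) := by
  have hdiv : Tendsto (fun x => a x / b x) l (𝓝 0) := by
    refine tendsto_order.2 ⟨fun ε hε => ?_, fun ε hε => ?_⟩
    · filter_upwards [hb] with x hx
      exact hε.trans_le (div_nonneg (ha x) hx.le)
    · filter_upwards [hb, h (2 / ε) (by positivity)] with x hx hmx
      rw [div_lt_iff₀ hx]
      have : 2 * a x ≤ ε * b x := by
        have := mul_le_mul_of_nonneg_left hmx hε.le
        rwa [← mul_assoc, mul_div_cancel₀ _ hε.ne'] at this
      nlinarith [ha x]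
  have hsub := hdiv.const_sub 1
  rw [sub_zero] at hsub
  refine hsub.congr' ?_
  filter_upwards [hb] with x hx
  rw [sub_div, div_self hx.ne']

theorem isGapComponent_of_mem_closure {E : Set ℝ} {a b : ℝ} (ha : 0 ≤ a) (hab : a < b)
    (hgap : Ioo a b ∩ E = ∅) (haE : a ∈ closure E) (hbE : b ∈ closure E) :
    IsGapComponent E a b := by
  refine ⟨ha, hab, hgap, fun a' b' _ ha' hb' hgap' => ⟨?_, ?_⟩⟩
  · by_contra hne
    -- otherwise `Ioo a' b'` is a neighbourhood of `a ∈ closure E` missing `E`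
    obtain ⟨x, hx, hxE⟩ := mem_closure_iff_nhds.1 haE _
      (Ioo_mem_nhds (ha'.lt_of_ne hne) (hab.trans_le hb'))
    exact (eq_empty_iff_forall_notMem.1 hgap') x ⟨hx, hxE⟩
  · by_contra hne
    obtain ⟨x, hx, hxE⟩ := mem_closure_iff_nhds.1 hbE _
      (Ioo_mem_nhds (ha'.trans_lt hab) (hb'.lt_of_ne (Ne.symm hne)))
    exact (eq_empty_iff_forall_notMem.1 hgap') x ⟨hx, hxE⟩

theorem tauStronglyPorous_of_eventually {E : Set ℝ} {t a b : ℕ → ℝ} (ht : ∀ n, 0 < t n)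
    (hgap : ∀ᶠ n in atTop, IsGapComponent E (a n) (b n)) (hanti : AlmostDecreasing a)
    (ha0 : Tendsto a atTop (𝓝 0)) (hba : Tendsto (fun n => (b n - a n) / b n) atTop (𝓝 1))
    {c₁ c₂ : ℝ} (h₁ : 0 < c₁) (h₂ : 0 < c₂)
    (hc : ∀ᶠ n in atTop, c₁ * t n < a n ∧ a n < c₂ * t n) : TauStronglyPorous E t := by
  obtain ⟨N, hN⟩ := eventually_atTop.mp (hgap.and hc)
  have hmax : ∀ᶠ n in atTop, max n N = n := by
    filter_upwards [eventually_ge_atTop N] with n hn using max_eq_left hn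
  have ha' : a =ᶠ[atTop] fun n => a (max n N) := by
    filter_upwards [hmax] with n hn using by rw [hn]
  have hb' : (fun n => (b n - a n) / b n) =ᶠ[atTop]
      fun n => (b (max n N) - a (max n N)) / b (max n N) := by
    filter_upwards [hmax] with n hn using by rw [hn]
  have hapos : ∀ n, 0 < a (max n N) := fun n =>
    (mul_pos h₁ (ht _)).trans (hN _ (le_max_right n N)).2.1
  refine ⟨fun n => a (max n N), fun n => b (max n N),
    ⟨fun n => (hN _ (le_max_right n N)).1, hanti.congr ha', ha0.congr' ha', hba.congr' hb'⟩,
    asymp_of_eventually ht hapos h₁ h₂ ?_⟩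
  filter_upwards [hc, hmax] with n hn hn' using by rwa [hn']

theorem isNormalE_of_mem {E : Set ℝ} {u : ℕ → ℝ} (hu : ∀ n, u n ∈ E) (hpos : ∀ n, 0 < u n)
    (hanti : AlmostDecreasing u) (hu0 : Tendsto u atTop (𝓝 0)) : IsNormalE E u := by
  refine ⟨⟨hpos, hu0⟩, u, hu, hanti, ?_⟩
  simp_rw [div_self (hpos _).ne']
  exact tendsto_const_nhds

theorem ofReal_le_rstarE {E : Set ℝ} {r s : ℕ → ℝ} (hr : IsNormalE E r) (hs : ∀ n, s n ∈ E)
    {L : ℝ} (hL : Tendsto (fun n => s n / r n) atTop (𝓝 L)) : ENNReal.ofReal L ≤ RstarE E :=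
  le_sSup ⟨r, s, L, hr, hs, hL, rfl⟩

theorem eventually_notMem_Icc_of_rstarE_lt {E : Set ℝ} {t : ℕ → ℝ} (ht : ∀ n, t n ∈ E)
    (hpos : ∀ n, 0 < t n) (hanti : AlmostDecreasing t) (ht0 : Tendsto t atTop (𝓝 0))
    {c : ℝ} (hc : RstarE E < ENNReal.ofReal c) (m : ℝ) :
    ∀ᶠ n in atTop, ∀ e ∈ E, e ∉ Icc (c * t n) (m * t n) := by
  by_contra hcon
  simp only [not_eventually, not_forall, not_not, exists_prop] at hcon
  obtain ⟨φ, hφ, hmem⟩ := extraction_of_frequently_atTop hcon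
  choose e heE he using hmem
  have hratio : ∀ k, e k / t (φ k) ∈ Icc c m := fun k =>
    ⟨(le_div_iff₀ (hpos _)).2 (he k).1, (div_le_iff₀ (hpos _)).2 (he k).2⟩
  obtain ⟨L, hL, ψ, hψ, hlim⟩ := isCompact_Icc.tendsto_subseq hratio
  have hnormal : IsNormalE E (t ∘ φ ∘ ψ) :=
    isNormalE_of_mem (fun _ => ht _) (fun _ => hpos _) (hanti.comp_strictMono (hφ.comp hψ))
      (ht0.comp (hφ.comp hψ).tendsto_atTop)
  have hle := (ofReal_le_rstarE hnormal (fun k => heE (ψ k)) hlim).trans_lt hc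
  exact (ENNReal.ofReal_le_ofReal hL.1).not_gt hle

theorem tauStronglyPorous_of_eventually_notMem_Icc {E : Set ℝ} {t : ℕ → ℝ}
    (ht : ∀ n, t n ∈ E) (hpos : ∀ n, 0 < t n) (hanti : AlmostDecreasing t)
    (ht0 : Tendsto t atTop (𝓝 0)) {c : ℝ} (hc : 1 ≤ c)
    (hgap : ∀ m, ∀ᶠ n in atTop, ∀ e ∈ E, e ∉ Icc (c * t n) (m * t n)) :
    TauStronglyPorous E t := by
  set A : ℕ → ℝ := fun n => sSup (E ∩ Iic (c * t n))
  set B : ℕ → ℝ := fun n => sInf (E ∩ Ioi (c * t n))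
  have hAmem : ∀ n, t n ∈ E ∩ Iic (c * t n) := fun n =>
    ⟨ht n, le_mul_of_one_le_left (hpos n).le hc⟩
  have hAbdd : ∀ n, BddAbove (E ∩ Iic (c * t n)) := fun n => ⟨c * t n, fun _ h => h.2⟩
  have hBbdd : ∀ n, BddBelow (E ∩ Ioi (c * t n)) := fun n => ⟨c * t n, fun _ h => h.2.le⟩
  have htA : ∀ n, t n ≤ A n := fun n => le_csSup (hAbdd n) (hAmem n)
  have hAc : ∀ n, A n ≤ c * t n := fun n => csSup_le ⟨_, hAmem n⟩ fun _ h => h.2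
  have hBne : ∀ᶠ n in atTop, (E ∩ Ioi (c * t n)).Nonempty := by
    have hct : Tendsto (fun n => c * t n) atTop (𝓝 0) := by
      simpa using ht0.const_mul c
    filter_upwards [hct.eventually_lt_const (hpos 0)] with n hn using ⟨t 0, ht 0, hn⟩
  have hB : ∀ m, ∀ᶠ n in atTop, m * t n ≤ B n := fun m => by
    filter_upwards [hBne, hgap m] with n hne hn
    exact le_csInf hne fun e he => (not_le.1 fun hle => hn e he.1 ⟨he.2.le, hle⟩).le
  have hgapComp : ∀ᶠ n in atTop, IsGapComponent E (A n) (B n) := by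
    filter_upwards [hBne, hB (c + 1)] with n hne hcB
    refine isGapComponent_of_mem_closure ((hpos n).le.trans (htA n)) ?_ ?_
      (closure_mono inter_subset_left (csSup_mem_closure ⟨_, hAmem n⟩ (hAbdd n)))
      (closure_mono inter_subset_left (csInf_mem_closure hne (hBbdd n)))
    · linarith [hAc n, hpos n]
    · refine eq_empty_iff_forall_notMem.2 fun x ⟨⟨hAx, hxB⟩, hxE⟩ => ?_
      rcases le_or_gt x (c * t n) with hx | hx
      · exact (le_csSup (hAbdd n) ⟨hxE, hx⟩).not_gt hAx
      · exact (csInf_le (hBbdd n) ⟨hxE, hx⟩).not_gt hxB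
  have hAanti : AlmostDecreasing A := by
    filter_upwards [hanti] with n hn
    exact csSup_le_csSup (hAbdd n) ⟨_, hAmem (n + 1)⟩
      (inter_subset_inter_right _ (Iic_subset_Iic.2 (by gcongr)))
  have hA0 : Tendsto A atTop (𝓝 0) :=
    squeeze_zero (fun n => (hpos n).le.trans (htA n)) hAc (by simpa using ht0.const_mul c)
  have hBA : Tendsto (fun n => (B n - A n) / B n) atTop (𝓝 1) := by
    refine tendsto_sub_div_self_of_forall_eventually_mul_le
      (fun n => (hpos n).le.trans (htA n)) ?_ fun m hm => ?_
    · filter_upwards [hB 1] with n hn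
      linarith [hpos n]
    · filter_upwards [hB (m * c)] with n hn
      calc m * A n ≤ m * (c * t n) := by gcongr; exact hAc n
        _ = m * c * t n := by ring
        _ ≤ B n := hn
  refine tauStronglyPorous_of_eventually hpos hgapComp hAanti hA0 hBA (c₁ := 1 / 2)
    (c₂ := c + 1) (by norm_num) (by linarith) (Eventually.of_forall fun n => ⟨?_, ?_⟩)
  · linarith [htA n, hpos n]
  · linarith [hAc n, hpos n]

theorem stmt8_general (E : Set ℝ) (hE : E ⊆ Ici 0) (hb : RstarE E < ⊤) : CSP E := by
  rintro t ⟨hanti, htE, ht0⟩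
  have hpos : ∀ n, 0 < t n := fun n => (hE (htE n).1).lt_of_ne' (htE n).2
  have hK : RstarE E < ENNReal.ofReal ((RstarE E).toReal + 1) :=
    (ENNReal.lt_ofReal_iff_toReal_lt hb.ne).2 (lt_add_one _)
  exact tauStronglyPorous_of_eventually_notMem_Icc (fun n => (htE n).1) hpos hanti ht0
    (by linarith [ENNReal.toReal_nonneg (a := RstarE E)])
    (eventually_notMem_Icc_of_rstarE_lt (fun n => (htE n).1) hpos hanti ht0 hK)

/-- Lemma 4.5. -/
theorem stmt8 (E : Set ℝ) (hE : E ⊆ Ici 0) (hacc : (0 : ℝ) ∈ closure (E \ {0}))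
    (hb : RstarE E < ⊤) : CSP E :=
  stmt8_general E hE hb
end

section
/- Let (X,d,p) be a pointed metric space admitting at least one normal scaling sequence (i.e., Ω_p^X(n) ≠ ∅). Then the family Ω_p^X(n) is uniformly discrete if and only if it is uniformly bounded; moreover, if Ω_p^X(n) is uniformly bounded then R_*(Ω_p^X(n)) = 1 / R*(Ω_p^X(n)). -/
open Filter Topology Set
open scoped ENNReal

/-! The positive limits `limₙ d(xₙ,p)/rₙ` along normal scaling sequences form a set that is
closed under `L ↦ 1/L`: passing to a subsequence on which `d(xₙ,p)` decreases, the sequence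
`d(xₙ,p)` is itself a normal scaling sequence, and the witness `ỹ` of normality of `r̃` then has
limit `1/L` with respect to it. For such a set the infimum is the inverse of the supremum,
and `R*` is that supremum, since nonpositive limits do not affect it. -/

lemma ENNReal.sInf_eq_inv_sSup_of_forall_inv_mem {s : Set ℝ≥0∞} (hs : ∀ a ∈ s, a⁻¹ ∈ s) :
    sInf s = (sSup s)⁻¹ := by
  rw [ENNReal.inv_sSup]
  refine le_antisymm (le_iInf₂ fun a ha => sInf_le (hs a ha)) (le_sInf fun b hb => ?_)
  exact (iInf₂_le (f := fun a (_ : a ∈ s) => a⁻¹) b⁻¹ (hs b hb)).trans_eq (inv_inv b)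

lemma exists_strictMono_strictAnti_of_tendsto_nhdsGT_zero {u : ℕ → ℝ}
    (hu : Tendsto u atTop (𝓝[>] 0)) :
    ∃ φ : ℕ → ℕ, StrictMono φ ∧ StrictAnti (u ∘ φ) ∧ ∀ k, 0 < u (φ k) := by
  obtain ⟨N, hN⟩ := eventually_atTop.1 (hu.eventually self_mem_nhdsWithin)
  have hshift : Tendsto (fun n => u (n + N)) atTop (𝓝[>] 0) :=
    hu.comp (tendsto_add_atTop_nat N)
  -- strictly decreasing values of `u` are strictly increasing values of `u⁻¹ → ∞`
  obtain ⟨φ, hφ, hinv⟩ := strictMono_subseq_of_tendsto_atTop hshift.inv_tendsto_nhdsGT_zero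
  have hpos : ∀ k, 0 < u (φ k + N) := fun k => hN _ (Nat.le_add_left N _)
  refine ⟨fun k => φ k + N, hφ.add_const N, fun a b hab => ?_, hpos⟩
  exact (inv_lt_inv₀ (hpos a) (hpos b)).1 (hinv hab)

lemma IsScaling.tendsto_nhdsGT_zero_of_tendsto_div {r f : ℕ → ℝ} (hr : IsScaling r) {L : ℝ}
    (hf : Tendsto (fun n => f n / r n) atTop (𝓝 L)) (hL : 0 < L) :
    Tendsto f atTop (𝓝[>] 0) := by
  have hmul : ∀ n, f n / r n * r n = f n := fun n => div_mul_cancel₀ _ (hr.1 n).ne'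
  refine tendsto_nhdsWithin_iff.2 ⟨?_, ?_⟩
  · simpa [hmul] using hf.mul hr.2
  · filter_upwards [hf.eventually (lt_mem_nhds hL)] with n hn
    simpa [hmul] using mul_pos hn (hr.1 n)

section PointedMetricSpace

variable {X : Type*} [MetricSpace X] {p : X}

lemma isNormalX_dist_of_antitone {x : ℕ → X} (hpos : ∀ n, 0 < dist (x n) p)
    (hanti : Antitone fun n => dist (x n) p) (h0 : Tendsto (fun n => dist (x n) p) atTop (𝓝 0)) :
    IsNormalX p fun n => dist (x n) p :=
  ⟨⟨hpos, h0⟩, x, .of_forall fun n => hanti n.le_succ,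
    tendsto_const_nhds.congr fun n => (div_self (hpos n).ne').symm⟩

lemma IsNormalX.exists_tendsto_inv {r : ℕ → ℝ} (hr : IsNormalX p r) {x : ℕ → X} {L : ℝ}
    (hx : Tendsto (fun n => dist (x n) p / r n) atTop (𝓝 L)) (hL : 0 < L) :
    ∃ (ρ : ℕ → ℝ) (z : ℕ → X), IsNormalX p ρ ∧
      Tendsto (fun n => dist (z n) p / ρ n) atTop (𝓝 L⁻¹) := by
  obtain ⟨hscale, y, -, hy⟩ := hr
  have hx0 := hscale.tendsto_nhdsGT_zero_of_tendsto_div hx hL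
  obtain ⟨φ, hφ, hanti, hpos⟩ := exists_strictMono_strictAnti_of_tendsto_nhdsGT_zero hx0
  refine ⟨fun k => dist (x (φ k)) p, y ∘ φ, isNormalX_dist_of_antitone hpos hanti.antitone
    ((tendsto_nhdsWithin_iff.1 hx0).1.comp hφ.tendsto_atTop), ?_⟩
  have hratio : Tendsto (fun n => dist (y n) p / r n * (dist (x n) p / r n)⁻¹) atTop
      (𝓝 (1 * L⁻¹)) := hy.mul (hx.inv₀ hL.ne')
  rw [one_mul] at hratio
  refine (hratio.comp hφ.tendsto_atTop).congr fun k => ?_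
  have hr0 : r (φ k) ≠ 0 := (hscale.1 _).ne'
  simp only [Function.comp_apply]
  field_simp

def positiveNormalLimits (p : X) : Set ℝ≥0∞ :=
  {c | ∃ (r : ℕ → ℝ) (x : ℕ → X) (L : ℝ), IsNormalX p r ∧
    Tendsto (fun n => dist (x n) p / r n) atTop (𝓝 L) ∧ 0 < L ∧ c = ENNReal.ofReal L}

lemma RlowX_eq_sInf_positiveNormalLimits : RlowX p = sInf (positiveNormalLimits p) := rfl

lemma RstarX_eq_sSup_positiveNormalLimits : RstarX p = sSup (positiveNormalLimits p) := by
  refine le_antisymm (sSup_le ?_) (sSup_le_sSup ?_)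
  · rintro _ ⟨r, x, L, hr, hx, rfl⟩
    rcases le_or_gt L 0 with hL | hL
    · simp [ENNReal.ofReal_eq_zero.2 hL]
    · exact le_sSup ⟨r, x, L, hr, hx, hL, rfl⟩
  · rintro _ ⟨r, x, L, hr, hx, -, rfl⟩
    exact ⟨r, x, L, hr, hx, rfl⟩

lemma inv_mem_positiveNormalLimits {c : ℝ≥0∞} (hc : c ∈ positiveNormalLimits p) :
    c⁻¹ ∈ positiveNormalLimits p := by
  obtain ⟨r, x, L, hr, hx, hL, rfl⟩ := hc
  obtain ⟨ρ, z, hρ, hz⟩ := hr.exists_tendsto_inv hx hL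
  exact ⟨ρ, z, L⁻¹, hρ, hz, inv_pos.2 hL, (ENNReal.ofReal_inv_of_pos hL).symm⟩

end PointedMetricSpace

lemma RlowX_eq_inv_RstarX {X : Type*} [MetricSpace X] (p : X) : RlowX p = (RstarX p)⁻¹ := by
  rw [RlowX_eq_sInf_positiveNormalLimits, RstarX_eq_sSup_positiveNormalLimits]
  exact ENNReal.sInf_eq_inv_sSup_of_forall_inv_mem fun _ => inv_mem_positiveNormalLimits

theorem stmt12_general {X : Type*} [MetricSpace X] (p : X) :
    (0 < RlowX p ↔ RstarX p < ⊤) ∧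
      (RstarX p < ⊤ → RlowX p = 1 / RstarX p) := by
  rw [RlowX_eq_inv_RstarX, ENNReal.inv_pos, lt_top_iff_ne_top, one_div]
  exact ⟨Iff.rfl, fun _ => rfl⟩

/-- Theorem 4.4.1. -/
theorem stmt12 {X : Type*} [MetricSpace X] (p : X)
    (hne : ∃ r : ℕ → ℝ, IsNormalX p r) :
    (0 < RlowX p ↔ RstarX p < ⊤) ∧
      (RstarX p < ⊤ → RlowX p = 1 / RstarX p) :=
  stmt12_general p
end

section
/- Let 𝔉 = {(X_i, d_i, p_i) : i ∈ I} be a nonempty weakly self-similar family of pointed metric spaces such that the unit sphere S_i = {x ∈ X_i : d_i(x,p_i) = 1} is nonempty for every i ∈ I. Then 𝔉 is uniformly bounded if and only if 𝔉 is uniformly discrete with respect to the marked points; moreover, if 𝔉 is uniformly bounded then R_*(𝔉) = 1 / R*(𝔉). -/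
open Filter Topology Set
open scoped ENNReal

/-- `ρ*(Y) = sup_{y ∈ Y} d(y,q)` in `[0,∞]`. -/
noncomputable def rhoSup {Y : Type*} [MetricSpace Y] (q : Y) : ℝ≥0∞ :=
  ⨆ y : Y, ENNReal.ofReal (dist y q)

/-- `ρ₊(Y) = inf{ d(y,q) : y ≠ q }` in `[0,∞]` (inf ∅ = ∞, i.e. `Y = {q}` gives `∞`). -/
noncomputable def rhoInf {Y : Type*} [MetricSpace Y] (q : Y) : ℝ≥0∞ :=
  sInf {c : ℝ≥0∞ | ∃ y : Y, y ≠ q ∧ c = ENNReal.ofReal (dist y q)}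

/-!
Weak self-similarity together with a nonempty unit sphere makes the set of nonzero distances
to the marked points closed under `t ↦ 1 / t`: rescaling `X i` by `1 / d(y, p i)` sends a point
of the unit sphere to a point at distance `1 / d(y, p i)` from the marked point of another
member. Inversion is an order-reversing involution of `[0, ∞]`, so the inf of such a set is the
inverse of its sup. Hence `R_* = 1 / R*`, and both claims follow.
-/

open scoped Pointwise

def nonzeroDists {Y : Type*} [MetricSpace Y] (q : Y) : Set ℝ≥0∞ :=
  {c | ∃ y : Y, y ≠ q ∧ c = ENNReal.ofReal (dist y q)}

lemma rhoInf_eq_sInf_nonzeroDists {Y : Type*} [MetricSpace Y] (q : Y) :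
    rhoInf q = sInf (nonzeroDists q) := rfl

lemma rhoSup_eq_sSup_nonzeroDists {Y : Type*} [MetricSpace Y] (q : Y) :
    rhoSup q = sSup (nonzeroDists q) := by
  refine le_antisymm (iSup_le fun y => ?_) (sSup_le ?_)
  · rcases eq_or_ne y q with rfl | hy
    · simp
    · exact le_sSup ⟨y, hy, rfl⟩
  · rintro _ ⟨y, -, rfl⟩
    exact le_iSup (fun y => ENNReal.ofReal (dist y q)) y

lemma ENNReal.sInf_eq_inv_sSup_of_inv_subset {s : Set ℝ≥0∞} (hs : s⁻¹ ⊆ s) :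
    sInf s = (sSup s)⁻¹ := by
  have hs_inv : s⁻¹ = s := hs.antisymm (Set.inv_subset.mp hs)
  rw [ENNReal.inv_sSup, ← sInf_image, Set.image_inv_eq_inv, hs_inv]

def WeaklySelfSimilar {I : Type*} (X : I → Type*) [∀ i, MetricSpace (X i)] (p : ∀ i, X i) :
    Prop :=
  ∀ (i : I) (t : ℝ), t ≠ 0 → (∃ x : X i, dist x (p i) = t) →
    ∃ (j : I) (f : X i → X j), Function.Bijective f ∧ f (p i) = p j ∧
      ∀ x y : X i, dist (f x) (f y) = dist x y / t

section Family

variable {I : Type*} {X : I → Type*} [∀ i, MetricSpace (X i)] {p : ∀ i, X i}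

lemma WeaklySelfSimilar.inv_nonzeroDists_subset (hss : WeaklySelfSimilar X p)
    (hsph : ∀ i, ∃ x : X i, dist x (p i) = 1) :
    (⋃ i, nonzeroDists (p i))⁻¹ ⊆ ⋃ i, nonzeroDists (p i) := by
  intro c hc
  obtain ⟨i, y, hy, hyc⟩ := mem_iUnion.mp (mem_inv.mp hc)
  have hd : 0 < dist y (p i) := dist_pos.mpr hy
  obtain ⟨j, f, -, hfp, hf⟩ := hss i _ hd.ne' ⟨y, rfl⟩
  obtain ⟨x, hx⟩ := hsph i
  have hfx : dist (f x) (p j) = (dist y (p i))⁻¹ := by rw [← hfp, hf, hx, one_div]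
  refine mem_iUnion.mpr ⟨j, f x, ?_, ?_⟩
  · rw [← dist_pos, hfx]
    exact inv_pos.mpr hd
  · rw [← inv_inv c, hyc, hfx, ENNReal.ofReal_inv_of_pos hd]

lemma WeaklySelfSimilar.iInf_rhoInf_eq_inv_iSup_rhoSup (hss : WeaklySelfSimilar X p)
    (hsph : ∀ i, ∃ x : X i, dist x (p i) = 1) :
    ⨅ i, rhoInf (p i) = (⨆ i, rhoSup (p i))⁻¹ := by
  have hinf : ⨅ i, rhoInf (p i) = sInf (⋃ i, nonzeroDists (p i)) := by
    simp only [rhoInf_eq_sInf_nonzeroDists]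
    exact (sSup_iUnion (β := ℝ≥0∞ᵒᵈ) _).symm
  simp only [hinf, rhoSup_eq_sSup_nonzeroDists, ← sSup_iUnion]
  exact ENNReal.sInf_eq_inv_sSup_of_inv_subset (hss.inv_nonzeroDists_subset hsph)

end Family

theorem stmt13_general {I : Type*} (X : I → Type*) [∀ i, MetricSpace (X i)]
    (p : ∀ i, X i)
    (hss : ∀ (i : I) (t : ℝ), t ≠ 0 → (∃ x : X i, dist x (p i) = t) →
      ∃ (j : I) (f : X i → X j), Function.Bijective f ∧ f (p i) = p j ∧
        ∀ x y : X i, dist (f x) (f y) = dist x y / t)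
    (hsph : ∀ i, ∃ x : X i, dist x (p i) = 1) :
    ((⨆ i, rhoSup (p i)) < ⊤ ↔ 0 < ⨅ i, rhoInf (p i)) ∧
      ((⨆ i, rhoSup (p i)) < ⊤ →
        (⨅ i, rhoInf (p i)) = 1 / ⨆ i, rhoSup (p i)) := by
  rw [WeaklySelfSimilar.iInf_rhoInf_eq_inv_iSup_rhoSup hss hsph, ENNReal.inv_pos,
    lt_top_iff_ne_top, one_div]
  exact ⟨Iff.rfl, fun _ => rfl⟩

/-- Theorem 4.4.3. -/
theorem stmt13 {I : Type*} [Nonempty I] (X : I → Type*) [∀ i, MetricSpace (X i)]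
    (p : ∀ i, X i)
    (hss : ∀ (i : I) (t : ℝ), t ≠ 0 → (∃ x : X i, dist x (p i) = t) →
      ∃ (j : I) (f : X i → X j), Function.Bijective f ∧ f (p i) = p j ∧
        ∀ x y : X i, dist (f x) (f y) = dist x y / t)
    (hsph : ∀ i, ∃ x : X i, dist x (p i) = 1) :
    ((⨆ i, rhoSup (p i)) < ⊤ ↔ 0 < ⨅ i, rhoInf (p i)) ∧
      ((⨆ i, rhoSup (p i)) < ⊤ →
        (⨅ i, rhoInf (p i)) = 1 / ⨆ i, rhoSup (p i)) :=
  stmt13_general X p hss hsph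
end

section
/- Let (X,d,p) be a pointed metric space, let r̃ = (r_n) be a normal scaling sequence and let F be a maximal self-stable family w.r.t. r̃ with p̃ = (p,p,...) ∈ F. Then there exist a strictly increasing sequence (n_k) of natural numbers, with μ̃ := (r_{n_k})_{k∈ℕ}, and a maximal self-stable family G w.r.t. μ̃ with p̃ ∈ G, such that: (a) G contains a sequence c̃ with d̃_μ̃(c̃,p̃) = 1; (b) inf{ d̃_μ̃(ỹ,p̃) : ỹ ∈ G, d̃_μ̃(ỹ,p̃) > 0 } ≤ inf{ d̃_r̃(x̃,p̃) : x̃ ∈ F, d̃_r̃(x̃,p̃) > 0 }; and (c) sup{ d̃_r̃(x̃,p̃) : x̃ ∈ F } ≤ sup{ d̃_μ̃(ỹ,p̃) : ỹ ∈ G }. -/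
open Filter Topology Set
open scoped ENNReal

/-- The set of values `d̃_r̃(x̃,p̃)` over `x̃ ∈ F`, as elements of `[0,∞]`. -/
def limSetX {X : Type*} [MetricSpace X] (p : X) (r : ℕ → ℝ) (F : Set (ℕ → X)) :
    Set ℝ≥0∞ :=
  {c | ∃ x ∈ F, ∃ L : ℝ,
    Tendsto (fun n => dist (x n) p / r n) atTop (𝓝 L) ∧ c = ENNReal.ofReal L}

/-- The set of strictly positive values `d̃_r̃(x̃,p̃)` over `x̃ ∈ F`. -/
def posLimSetX {X : Type*} [MetricSpace X] (p : X) (r : ℕ → ℝ) (F : Set (ℕ → X)) :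
    Set ℝ≥0∞ :=
  {c | ∃ x ∈ F, ∃ L : ℝ,
    Tendsto (fun n => dist (x n) p / r n) atTop (𝓝 L) ∧ 0 < L ∧ c = ENNReal.ofReal L}

/-!
Pick `x̃` with `d(xₙ,p)/rₙ → 1` and a countable subfamily `C ⊆ F` containing `p̃` whose values
`d̃_r̃(·,p̃)` approach both the supremum and the positive infimum over `F`. By the triangle
inequality through `p̃`, every `d(xₙ,yₙ)/rₙ` with `ỹ ∈ C` is bounded, so a diagonal argument
(sequential compactness of `[-∞,∞]^C`) gives a subsequence `(n_k)` along which `x̃` is mutually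
stable with every member of `C`. Zorn's lemma extends this self-stable family to a maximal one
`G`; passing to a subsequence keeps all limits, so `G` attains every value attained by `C`.
-/

theorem exists_strictMono_forall_tendsto {ι : Type*} [Countable ι] (f : ℕ → ι → ℝ)
    (hf : ∀ i, IsBoundedUnder (· ≤ ·) atTop fun n => |f n i|) :
    ∃ φ : ℕ → ℕ, StrictMono φ ∧ ∀ i, ∃ L, Tendsto (fun k => f (φ k) i) atTop (𝓝 L) := by
  obtain ⟨a, -, φ, hφ, ha⟩ :=
    isCompact_univ.tendsto_subseq (x := fun n i => (f n i : EReal)) fun _ => mem_univ _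
  refine ⟨φ, hφ, fun i => ?_⟩
  have hai : Tendsto (fun k => (f (φ k) i : EReal)) atTop (𝓝 (a i)) := tendsto_pi_nhds.1 ha i
  obtain ⟨C, hC⟩ := hf i
  have hbound : ∀ᶠ k in atTop, (f (φ k) i : EReal) ∈ Icc ((-C : ℝ) : EReal) C := by
    filter_upwards [hφ.tendsto_atTop.eventually hC] with k hk
    exact ⟨EReal.coe_le_coe_iff.2 (neg_le_of_abs_le hk),
      EReal.coe_le_coe_iff.2 (le_of_abs_le hk)⟩
  have haC : a i ∈ Icc ((-C : ℝ) : EReal) C := isClosed_Icc.mem_of_tendsto hai hbound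
  refine ⟨(a i).toReal, EReal.tendsto_coe.1 ?_⟩
  rwa [EReal.coe_toReal (ne_top_of_le_ne_top (EReal.coe_ne_top C) haC.2)
    (ne_bot_of_le_ne_bot (EReal.coe_ne_bot _) haC.1)]

section CountableWitnesses

variable {α β : Type*} [CompleteLinearOrder β] [TopologicalSpace β] [OrderTopology β]
  [FirstCountableTopology β]

theorem exists_countable_subset_sSup_le (S : Set α) (R : α → β → Prop) :
    ∃ C ⊆ S, C.Countable ∧ sSup {c | ∃ x ∈ S, R x c} ≤ sSup {c | ∃ x ∈ C, R x c} := by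
  rcases eq_empty_or_nonempty {c | ∃ x ∈ S, R x c} with hV | hV
  · exact ⟨∅, empty_subset _, countable_empty, by rw [hV, sSup_empty]; exact bot_le⟩
  obtain ⟨u, -, hu, huV⟩ := exists_seq_tendsto_sSup hV (OrderTop.bddAbove _)
  choose x hxS hxR using huV
  refine ⟨range x, range_subset_iff.2 hxS, countable_range x, ?_⟩
  exact le_of_tendsto' hu fun n => le_sSup ⟨x n, mem_range_self n, hxR n⟩

theorem exists_countable_subset_le_sInf (S : Set α) (R : α → β → Prop) :
    ∃ C ⊆ S, C.Countable ∧ sInf {c | ∃ x ∈ C, R x c} ≤ sInf {c | ∃ x ∈ S, R x c} :=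
  exists_countable_subset_sSup_le (β := βᵒᵈ) S R

end CountableWitnesses

section Stability

variable {X : Type*} [MetricSpace X] {r : ℕ → ℝ} {x y : ℕ → X} {S : Set (ℕ → X)}

theorem MutuallyStable.refl (r : ℕ → ℝ) (x : ℕ → X) : MutuallyStable r x x :=
  ⟨0, by simp only [dist_self, zero_div, tendsto_const_nhds]⟩

theorem MutuallyStable.symm (h : MutuallyStable r x y) : MutuallyStable r y x := by
  obtain ⟨L, hL⟩ := h
  exact ⟨L, by simpa only [dist_comm] using hL⟩

theorem MutuallyStable.comp {φ : ℕ → ℕ} (h : MutuallyStable r x y)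
    (hφ : Tendsto φ atTop atTop) :
    MutuallyStable (fun k => r (φ k)) (fun k => x (φ k)) (fun k => y (φ k)) := by
  obtain ⟨L, hL⟩ := h
  exact ⟨L, hL.comp hφ⟩

theorem MutuallyStable.isBoundedUnder_abs_dist_div {z : ℕ → X} (hxy : MutuallyStable r x y)
    (hyz : MutuallyStable r y z) :
    IsBoundedUnder (· ≤ ·) atTop fun n => |dist (x n) (z n) / r n| := by
  obtain ⟨L₁, hL₁⟩ := hxy
  obtain ⟨L₂, hL₂⟩ := hyz
  refine (isBoundedUnder_le_add hL₁.abs.isBoundedUnder_le hL₂.abs.isBoundedUnder_le).mono_le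
    (Eventually.of_forall fun n => ?_)
  simp only [Pi.add_apply, abs_div, abs_dist, ← add_div]
  exact div_le_div_of_nonneg_right (dist_triangle _ _ _) (abs_nonneg _)

theorem SelfStable.insert_of_mutuallyStable (hS : SelfStable r S)
    (hx : ∀ y ∈ S, MutuallyStable r x y) : SelfStable r (insert x S) := by
  rintro y (rfl | hy) z (rfl | hz)
  · exact .refl r _
  · exact hx z hz
  · exact (hx y hy).symm
  · exact hS y hy z hz

theorem SelfStable.mono {T : Set (ℕ → X)} (hT : SelfStable r T) (hST : S ⊆ T) :
    SelfStable r S :=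
  fun y hy z hz => hT y (hST hy) z (hST hz)

theorem IsChain.selfStable_sUnion {c : Set (Set (ℕ → X))} (hc : ∀ T ∈ c, SelfStable r T)
    (hchain : IsChain (· ⊆ ·) c) : SelfStable r (⋃₀ c) := by
  rintro y ⟨Ty, hTy, hy⟩ z ⟨Tz, hTz, hz⟩
  rcases hchain.total hTy hTz with h | h
  · exact hc Tz hTz y (h hy) z hz
  · exact hc Ty hTy y hy z (h hz)

theorem SelfStable.exists_maximalSelfStable_superset (hS : SelfStable r S) :
    ∃ G, S ⊆ G ∧ MaximalSelfStable r G := by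
  obtain ⟨G, hSG, hG⟩ := zorn_subset_nonempty {T : Set (ℕ → X) | SelfStable r T}
    (fun c hc hchain _ => ⟨⋃₀ c, hchain.selfStable_sUnion hc, fun _ => subset_sUnion_of_mem⟩)
    S hS
  refine ⟨G, hSG, hG.prop, fun z => or_iff_not_imp_right.2 fun hz => ?_⟩
  push Not at hz
  exact hG.2 (hG.prop.insert_of_mutuallyStable fun y hy => (hz y hy).symm) (subset_insert z G)
    (mem_insert z G)

theorem SelfStable.exists_strictMono_selfStable_insert {q : ℕ → X} (hS : SelfStable r S)
    (hSc : S.Countable) (hq : q ∈ S) (hxq : MutuallyStable r x q) :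
    ∃ φ : ℕ → ℕ, StrictMono φ ∧ SelfStable (fun k => r (φ k))
      (insert (fun k => x (φ k)) ((fun (y : ℕ → X) k => y (φ k)) '' S)) := by
  have : Countable S := hSc.to_subtype
  obtain ⟨φ, hφ, hlim⟩ := exists_strictMono_forall_tendsto
    (fun n (y : S) => dist (x n) ((y : ℕ → X) n) / r n)
    fun y => hxq.isBoundedUnder_abs_dist_div (hS q hq y y.2)
  refine ⟨φ, hφ, SelfStable.insert_of_mutuallyStable ?_ ?_⟩
  · rintro _ ⟨y, hy, rfl⟩ _ ⟨z, hz, rfl⟩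
    exact (hS y hy z hz).comp hφ.tendsto_atTop
  · rintro _ ⟨y, hy, rfl⟩
    exact hlim ⟨y, hy⟩

end Stability

section LimitSets

variable {X : Type*} [MetricSpace X] {p : X} {r : ℕ → ℝ} {φ : ℕ → ℕ} {S T : Set (ℕ → X)}

theorem limSetX_subset_of_image_subset (hφ : Tendsto φ atTop atTop)
    (hST : (fun (y : ℕ → X) k => y (φ k)) '' S ⊆ T) :
    limSetX p r S ⊆ limSetX p (fun k => r (φ k)) T :=
  fun _ ⟨y, hy, L, hL, hc⟩ => ⟨_, hST ⟨y, hy, rfl⟩, L, hL.comp hφ, hc⟩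

theorem posLimSetX_subset_of_image_subset (hφ : Tendsto φ atTop atTop)
    (hST : (fun (y : ℕ → X) k => y (φ k)) '' S ⊆ T) :
    posLimSetX p r S ⊆ posLimSetX p (fun k => r (φ k)) T :=
  fun _ ⟨y, hy, L, hL, hL0, hc⟩ => ⟨_, hST ⟨y, hy, rfl⟩, L, hL.comp hφ, hL0, hc⟩

end LimitSets

/-- Lemma 4.4.4. -/
theorem stmt14 {X : Type*} [MetricSpace X] (p : X) (r : ℕ → ℝ) (hr : IsNormalX p r)
    (F : Set (ℕ → X)) (hF : MaximalSelfStable r F) (hpF : (fun _ => p) ∈ F) :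
    ∃ nk : ℕ → ℕ, StrictMono nk ∧
      ∃ G : Set (ℕ → X), MaximalSelfStable (fun k => r (nk k)) G ∧ (fun _ => p) ∈ G ∧
        (∃ c ∈ G, Tendsto (fun k => dist (c k) p / r (nk k)) atTop (𝓝 1)) ∧
        sInf (posLimSetX p (fun k => r (nk k)) G) ≤ sInf (posLimSetX p r F) ∧
        sSup (limSetX p r F) ≤ sSup (limSetX p (fun k => r (nk k)) G) := by
  obtain ⟨-, x, -, hx⟩ := hr
  obtain ⟨Csup, hCsupF, hCsup, hsup⟩ := exists_countable_subset_sSup_le F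
    fun y c => ∃ L : ℝ, Tendsto (fun n => dist (y n) p / r n) atTop (𝓝 L) ∧
      c = ENNReal.ofReal L
  obtain ⟨Cinf, hCinfF, hCinf, hinf⟩ := exists_countable_subset_le_sInf F
    fun y c => ∃ L : ℝ, Tendsto (fun n => dist (y n) p / r n) atTop (𝓝 L) ∧ 0 < L ∧
      c = ENNReal.ofReal L
  set C := insert (fun _ => p) (Csup ∪ Cinf)
  have hCF : C ⊆ F := insert_subset hpF (union_subset hCsupF hCinfF)
  obtain ⟨φ, hφ, hS⟩ := (hF.1.mono hCF).exists_strictMono_selfStable_insert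
    ((hCsup.union hCinf).insert _) (mem_insert _ _) ⟨1, hx⟩
  obtain ⟨G, hSG, hG⟩ := hS.exists_maximalSelfStable_superset
  have hCG : (fun (y : ℕ → X) k => y (φ k)) '' C ⊆ G := (subset_insert _ _).trans hSG
  refine ⟨φ, hφ, G, hG, hCG ⟨_, mem_insert _ _, rfl⟩,
    ⟨_, hSG (mem_insert _ _), hx.comp hφ.tendsto_atTop⟩, ?_, ?_⟩
  · calc sInf (posLimSetX p (fun k => r (φ k)) G) ≤ sInf (posLimSetX p r Cinf) :=
          sInf_le_sInf <| posLimSetX_subset_of_image_subset hφ.tendsto_atTop <|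
            (image_mono (subset_union_right.trans (subset_insert _ _))).trans hCG
      _ ≤ sInf (posLimSetX p r F) := hinf
  · calc sSup (limSetX p r F) ≤ sSup (limSetX p r Csup) := hsup
      _ ≤ sSup (limSetX p (fun k => r (φ k)) G) :=
          sSup_le_sSup <| limSetX_subset_of_image_subset hφ.tendsto_atTop <|
            (image_mono (subset_union_left.trans (subset_insert _ _))).trans hCG
end
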